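/- arXiv:1611.07138 — 4 statements merged into one kernel-verified Lean document; each statement's English description precedes it below -/
import Mathlib

section
/- Let R be an m×m symmetric positive definite real matrix, h ∈ ℝ^m, A an n×m real matrix, and b ∈ ℝ^n in the range of A. Then the unique minimizer of x ↦ (1/2)xᵀRx + hᵀx subject to Ax = b is x* = R⁻¹AᵀL⁺b + (R⁻¹AᵀL⁺A − I)R⁻¹h, where L := AR⁻¹Aᵀ and L⁺ is its Moore–Penrose pseudoinverse. -/
/-!
With `f x = ½ xᵀRx + hᵀx` and `R` symmetric, `f (x + d) = f x + dᵀ(Rx + h) + ½ dᵀRd`. So if `x*`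
is feasible and its gradient `Rx* + h` lies in the range of `Aᵀ`, then for every nonzero `d` with
`Ad = 0` the linear term vanishes and `f (x* + d) - f x* = ½ dᵀRd > 0`.

For the given `x*`, feasibility and the gradient condition both come down to `L L⁺ A = A`. This
follows from the Penrose conditions `L L⁺ L = L` and `(L L⁺)ᵀ = L L⁺`: `S = (1 - L L⁺) A` satisfies
`S R⁻¹ Sᵀ = (1 - L L⁺) L (1 - L L⁺) = 0`, and `R⁻¹` is positive definite, so `S = 0`.
-/

open Matrix

namespace Matrix

variable {m n R : Type*} [Fintype n] [CommRing R] [PartialOrder R] [StarRing R]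

theorem PosDef.eq_zero_of_mul_mul_conjTranspose_eq_zero {M : Matrix n n R} (hM : M.PosDef)
    {S : Matrix m n R} (hS : S * M * Sᴴ = 0) : S = 0 := by
  ext i j
  by_contra hij
  have hrow : star (S i) ≠ 0 := fun h0 => hij (by simpa using congrFun h0 j)
  have hdiag : (S * M * Sᴴ) i i = star (star (S i)) ⬝ᵥ M *ᵥ star (S i) := by
    rw [mul_apply_eq_vecMul, star_star, dotProduct_mulVec]
    rfl
  have hpos := hM.dotProduct_mulVec_pos hrow
  rw [← hdiag, hS, zero_apply] at hpos
  exact hpos.false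

theorem mul_mul_eq_self_of_eq_mul_mul_conjTranspose [Fintype m] {M : Matrix n n R}
    (hM : M.PosDef) {A : Matrix m n R} {L Lp : Matrix m m R} (hL : L = A * M * Aᴴ)
    (hp1 : L * Lp * L = L) (hp3 : (L * Lp)ᴴ = L * Lp) :
    L * Lp * A = A := by
  set P := L * Lp
  have hS : (A - P * A) * M * (A - P * A)ᴴ = 0 := by
    calc (A - P * A) * M * (A - P * A)ᴴ = (L - P * L) - (L - P * L) * P := by
          rw [conjTranspose_sub, conjTranspose_mul, hp3, hL]
          simp only [Matrix.sub_mul, Matrix.mul_sub, Matrix.mul_assoc]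
      _ = 0 := by rw [hp1, sub_self, Matrix.zero_mul, sub_self]
  exact (sub_eq_zero.mp (hM.eq_zero_of_mul_mul_conjTranspose_eq_zero hS)).symm

end Matrix

section QuadraticObjective

variable {m n 𝕜 : Type*} [Fintype m] [Fintype n] [Field 𝕜]

def quadraticObjective (R : Matrix n n 𝕜) (h x : n → 𝕜) : 𝕜 :=
  1 / 2 * (x ⬝ᵥ R *ᵥ x) + h ⬝ᵥ x

variable [LinearOrder 𝕜] [IsStrictOrderedRing 𝕜]

theorem quadraticObjective_add {R : Matrix n n 𝕜} (hR : R.IsSymm) (h x d : n → 𝕜) :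
    quadraticObjective R h (x + d) =
      quadraticObjective R h x + d ⬝ᵥ (R *ᵥ x + h) + 1 / 2 * (d ⬝ᵥ R *ᵥ d) := by
  have hsymm : x ⬝ᵥ R *ᵥ d = d ⬝ᵥ R *ᵥ x := by
    rw [dotProduct_mulVec, ← mulVec_transpose, hR.eq, dotProduct_comm]
  simp only [quadraticObjective, mulVec_add, dotProduct_add, add_dotProduct, hsymm,
    dotProduct_comm h d]
  ring

theorem quadraticObjective_lt_of_mulVec_add_eq_transpose_mulVec [StarRing 𝕜] [TrivialStar 𝕜]
    {R : Matrix n n 𝕜} (hR : R.PosDef) {h xs x : n → 𝕜} {A : Matrix m n 𝕜} {y : m → 𝕜}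
    (hgrad : R *ᵥ xs + h = Aᵀ *ᵥ y) (hA : A *ᵥ x = A *ᵥ xs) (hne : x ≠ xs) :
    quadraticObjective R h xs < quadraticObjective R h x := by
  obtain ⟨d, rfl⟩ : ∃ d, x = xs + d := ⟨x - xs, by abel⟩
  have hd : d ≠ 0 := by rintro rfl; simp at hne
  have hAd : A *ᵥ d = 0 := by simpa [mulVec_add] using hA
  have horth : d ⬝ᵥ (R *ᵥ xs + h) = 0 := by
    rw [hgrad, dotProduct_mulVec, vecMul_transpose, hAd, zero_dotProduct]
  have hpos : 0 < d ⬝ᵥ R *ᵥ d := by simpa using hR.dotProduct_mulVec_pos hd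
  rw [quadraticObjective_add (isHermitian_iff_isSymm.mp hR.isHermitian), horth]
  linarith

end QuadraticObjective

theorem stmt0_general {m n : ℕ} (R : Matrix (Fin m) (Fin m) ℝ) (hR : R.PosDef)
    (h : Fin m → ℝ) (A : Matrix (Fin n) (Fin m) ℝ) (b : Fin n → ℝ)
    (hb : ∃ x, A *ᵥ x = b)
    (L : Matrix (Fin n) (Fin n) ℝ) (hL : L = A * R⁻¹ * Aᵀ)
    (Lp : Matrix (Fin n) (Fin n) ℝ)
    (hp1 : L * Lp * L = L)
    (hp3 : (L * Lp)ᵀ = L * Lp)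
    (xstar : Fin m → ℝ)
    (hx : xstar = R⁻¹ *ᵥ (Aᵀ *ᵥ (Lp *ᵥ b)) + (R⁻¹ * Aᵀ * Lp * A - 1) *ᵥ (R⁻¹ *ᵥ h)) :
    A *ᵥ xstar = b ∧
      ∀ x : Fin m → ℝ, A *ᵥ x = b → x ≠ xstar →
        (1 / 2) * (xstar ⬝ᵥ R *ᵥ xstar) + h ⬝ᵥ xstar <
          (1 / 2) * (x ⬝ᵥ R *ᵥ x) + h ⬝ᵥ x := by
  obtain ⟨x0, rfl⟩ := hb
  have hRdet : IsUnit R.det := (isUnit_iff_isUnit_det R).mp hR.isUnit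
  have hLA : L * Lp * A = A :=
    mul_mul_eq_self_of_eq_mul_mul_conjTranspose hR.inv (by simpa using hL) hp1 (by simpa using hp3)
  have hfeas : A *ᵥ xstar = A *ᵥ x0 := by
    simp only [hx, mulVec_add, mulVec_mulVec, Matrix.mul_sub, Matrix.mul_one, ← Matrix.mul_assoc,
      ← hL, hLA, sub_self, Matrix.zero_mul, zero_mulVec, add_zero]
  have hgrad : R *ᵥ xstar + h = Aᵀ *ᵥ (Lp *ᵥ (A *ᵥ x0) + (Lp * A * R⁻¹) *ᵥ h) := by
    have hxR : xstar = R⁻¹ *ᵥ (Aᵀ *ᵥ (Lp *ᵥ (A *ᵥ x0) + (Lp * A * R⁻¹) *ᵥ h) - h) := by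
      simp only [hx, mulVec_add, mulVec_sub, mulVec_mulVec, Matrix.sub_mul, sub_mulVec,
        Matrix.one_mul, Matrix.mul_assoc, add_sub_assoc]
    rw [hxR, mulVec_mulVec, mul_nonsing_inv _ hRdet, one_mulVec, sub_add_cancel]
  exact ⟨hfeas, fun x hAx hne =>
    quadraticObjective_lt_of_mulVec_add_eq_transpose_mulVec hR hgrad (hAx.trans hfeas.symm) hne⟩

/-- unique minimizer of the equality-constrained quadratic problem,
expressed via the Moore–Penrose pseudoinverse `Lp` of `L = A R⁻¹ Aᵀ`
(characterized by the four Penrose conditions). -/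
theorem stmt0 {m n : ℕ} (R : Matrix (Fin m) (Fin m) ℝ) (hR : R.PosDef)
    (h : Fin m → ℝ) (A : Matrix (Fin n) (Fin m) ℝ) (b : Fin n → ℝ)
    (hb : ∃ x, A *ᵥ x = b)
    (L : Matrix (Fin n) (Fin n) ℝ) (hL : L = A * R⁻¹ * Aᵀ)
    (Lp : Matrix (Fin n) (Fin n) ℝ)
    (hp1 : L * Lp * L = L) (hp2 : Lp * L * Lp = Lp)
    (hp3 : (L * Lp)ᵀ = L * Lp) (hp4 : (Lp * L)ᵀ = Lp * L)
    (xstar : Fin m → ℝ)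
    (hx : xstar = R⁻¹ *ᵥ (Aᵀ *ᵥ (Lp *ᵥ b)) + (R⁻¹ * Aᵀ * Lp * A - 1) *ᵥ (R⁻¹ *ᵥ h)) :
    A *ᵥ xstar = b ∧
      ∀ x : Fin m → ℝ, A *ᵥ x = b → x ≠ xstar →
        (1 / 2) * (xstar ⬝ᵥ R *ᵥ xstar) + h ⬝ᵥ xstar <
          (1 / 2) * (x ⬝ᵥ R *ᵥ x) + h ⬝ᵥ x :=
  stmt0_general R hR h A b hb L hL Lp hp1 hp3 xstar hx
end

section
/- Let G = (V,E,W) be a connected weighted graph and Z ⊆ V nonempty. Let L̄ be the restricted Laplacian obtained by deleting rows and columns in Z from L = D − W. Then L̄ is invertible, and for all v,w ∈ V∖Z: (L̄⁻¹)_{vw} = (L̄⁻¹)_{ww} · P_v(T_w < T_Z), and (L̄⁻¹)_{ww} = (1/d_w) · E_w[ Σ_{k=0}^{T_Z} 1{X_k = w} ], where X is the weighted random walk on G, T_A denotes the hitting time of A, and d_w is the weighted degree of w. -/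
open scoped Classical

/-- One-step transition probability of the weighted random walk: `P v u = W v u / d v`. -/
noncomputable def stepProb {V : Type*} [Fintype V] (W : V → V → ℝ) (a c : V) : ℝ :=
  W a c / ∑ u, W a u

/-- `P_v(T_w < T_Z)`: probability that the weighted random walk started at `v`
hits `w` strictly before hitting `Z`, written as a sum over finite paths. -/
noncomputable def hitBefore {V : Type*} [Fintype V] (W : V → V → ℝ)
    (Z : Finset V) (v w : V) : ℝ :=
  ∑' k : ℕ, ∑ x : Fin (k + 1) → V,
    if x 0 = v ∧ x (Fin.last k) = w ∧ (∀ i, x i ∉ Z) ∧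
        (∀ i : Fin (k + 1), i ≠ Fin.last k → x i ≠ w) then
      ∏ i : Fin k, stepProb W (x i.castSucc) (x i.succ)
    else 0

/-- `E_w[∑_{k=0}^{T_Z} 1_{X_k = w}]`: expected number of visits to `w` before
hitting `Z`, for the walk started at `w` (note `X_{T_Z} ∈ Z ≠ w`). -/
noncomputable def occupation {V : Type*} [Fintype V] (W : V → V → ℝ)
    (Z : Finset V) (w : V) : ℝ :=
  ∑' k : ℕ, ∑ x : Fin (k + 1) → V,
    if x 0 = w ∧ x (Fin.last k) = w ∧ (∀ i, x i ∉ Z) then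
      ∏ i : Fin k, stepProb W (x i.castSucc) (x i.succ)
    else 0

/-!
Let `d` be the weighted degrees and `P = D⁻¹W` restricted to `V ∖ Z`, the transition matrix of
the walk killed on entering `Z`; then `L̄ = D (1 - P)`. Connectivity lets every state leak into
`Z` within finitely many steps, so some power of the substochastic matrix `P` has maximal row
sum `< 1`. Hence the Neumann series `∑ Pᵏ` converges to `(1 - P)⁻¹` and
`L̄⁻¹ = (1 - P)⁻¹ D⁻¹`. Expanding `(Pᵏ)_{vw}` as a sum over paths avoiding `Z` gives the
occupation formula, and cutting each path at its first visit to `w` gives the renewal identity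
`(Pᵏ)_{vw} = ∑ⱼ fⱼ(v, w) (Pᵏ⁻ʲ)_{ww}` with first-passage weights `fⱼ`; summed over `k` it is
`(1 - P)⁻¹_{vw} = P_v(T_w < T_Z) (1 - P)⁻¹_{ww}`.
-/

open Finset

theorem summable_pow_of_norm_pow_lt_one {R : Type*} [NormedRing R] [CompleteSpace R] {x : R}
    {N : ℕ} [NeZero N] (h : ‖x ^ N‖ < 1) : Summable (x ^ ·) := by
  -- `x ^ (q * N + r) = (x ^ N) ^ q * x ^ r` with `r < N`
  have hprod : Summable fun p : ℕ × Fin N => (x ^ N) ^ p.1 * x ^ (p.2 : ℕ) :=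
    summable_mul_of_summable_norm (f := fun q : ℕ => (x ^ N) ^ q)
      (g := fun r : Fin N => x ^ (r : ℕ)) (summable_norm_geometric_of_norm_lt_one h)
      Summable.of_finite
  refine ((Nat.divModEquiv N).symm.summable_iff).1 (hprod.congr fun p => ?_)
  simp [Nat.divModEquiv, ← pow_mul, ← pow_add, mul_comm]

theorem sum_eq_sum_subtype_of_not_forall {α M : Type*} [Fintype α] [AddCommMonoid M]
    (p : α → Prop) [DecidablePred p] {n : ℕ} (f : (Fin n → α) → M)
    (hf : ∀ x, ¬(∀ i, p (x i)) → f x = 0) :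
    ∑ x, f x = ∑ y : Fin n → Subtype p, f fun i => y i := by
  rw [← sum_filter_of_ne fun x _ hx => not_imp_comm.1 (hf x) hx,
    sum_subtype _ (fun x => mem_filter_univ x),
    ← (Equiv.subtypePiEquivPi (p := fun _ => p)).symm.sum_comp]
  rfl

namespace Matrix

theorem sum_mul_apply {l m n α : Type*} [Fintype m] [Fintype n] [NonUnitalNonAssocSemiring α]
    (A : Matrix l m α) (B : Matrix m n α) (i : l) :
    ∑ j, (A * B) i j = ∑ k, A i k * ∑ j, B k j := by
  simp only [mul_apply, mul_sum]
  exact sum_comm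

section Paths

variable {ι R : Type*} [CommSemiring R] (P : Matrix ι ι R)

def pathWeight {k : ℕ} (y : Fin (k + 1) → ι) : R :=
  ∏ i : Fin k, P (y i.castSucc) (y i.succ)

theorem pathWeight_cons {k : ℕ} (a : ι) (y : Fin (k + 1) → ι) :
    P.pathWeight (Fin.cons a y : Fin (k + 2) → ι) = P a (y 0) * P.pathWeight y := by
  simp [pathWeight, Fin.prod_univ_succ]

variable [Fintype ι] [DecidableEq ι]

theorem sum_pathWeight_succ {k : ℕ} (a : ι) (q : (Fin (k + 1) → ι) → Prop) [DecidablePred q] :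
    ∑ y : Fin (k + 2) → ι with y 0 = a ∧ q (Fin.tail y), P.pathWeight y
      = ∑ b, P a b * ∑ y : Fin (k + 1) → ι with y 0 = b ∧ q y, P.pathWeight y := by
  have hsplit : ∑ y : Fin (k + 2) → ι with y 0 = a ∧ q (Fin.tail y), P.pathWeight y
      = ∑ y : Fin (k + 1) → ι with q y, P a (y 0) * P.pathWeight y := by
    rw [sum_filter, ← (Fin.consEquiv fun _ => ι).sum_comp, Fintype.sum_prod_type, sum_filter,
      sum_comm]
    simp [Fin.consEquiv, pathWeight_cons, ite_and]
  simp_rw [hsplit, mul_sum, ← sum_fiberwise (s := {y : Fin (k + 1) → ι | q y}) (g := fun y => y 0),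
    filter_filter]
  refine sum_congr rfl fun b _ => sum_congr (by ext; simp [and_comm]) fun y hy => ?_
  rw [(mem_filter.1 hy).2.1]

theorem pow_apply_eq_sum_pathWeight (k : ℕ) (a c : ι) :
    (P ^ k) a c = ∑ y : Fin (k + 1) → ι with y 0 = a ∧ y (Fin.last k) = c, P.pathWeight y := by
  induction k generalizing a with
  | zero =>
    rw [sum_filter, ← (Equiv.funUnique (Fin 1) ι).symm.sum_comp]
    by_cases h : a = c
    · subst h
      simp [pathWeight, Fin.last]
    · have hempty : ∀ x : ι, ¬(x = a ∧ x = c) := fun x hx => h (hx.1.symm.trans hx.2)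
      simp [Fin.last, h, hempty]
  | succ k ih =>
    have hlast : ∀ y : Fin (k + 2) → ι, y (Fin.last (k + 1)) = Fin.tail y (Fin.last k) := by
      simp [Fin.tail, Fin.succ_last]
    simp_rw [pow_succ', mul_apply, ih, hlast]
    exact (P.sum_pathWeight_succ a fun y => y (Fin.last k) = c).symm

def firstPassage (k : ℕ) (a c : ι) : R :=
  ∑ y : Fin (k + 1) → ι with
    y 0 = a ∧ y (Fin.last k) = c ∧ ∀ i : Fin (k + 1), i ≠ Fin.last k → y i ≠ c,
    P.pathWeight y

theorem firstPassage_zero (a c : ι) : P.firstPassage 0 a c = (1 : Matrix ι ι R) a c := by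
  rw [← pow_zero P, pow_apply_eq_sum_pathWeight, firstPassage]
  congr! 3 with y
  exact and_iff_left fun i hi => absurd (Fin.ext (by simp)) hi

theorem firstPassage_succ_self (k : ℕ) (c : ι) : P.firstPassage (k + 1) c c = 0 :=
  sum_eq_zero fun y hy => by
    obtain ⟨h0, -, hav⟩ := (mem_filter_univ _).1 hy
    exact absurd h0 (hav 0 Fin.last_pos.ne)

theorem firstPassage_succ_of_ne (k : ℕ) {a c : ι} (hac : a ≠ c) :
    P.firstPassage (k + 1) a c = ∑ b, P a b * P.firstPassage k b c := by
  simp only [firstPassage]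
  rw [← sum_pathWeight_succ P a
    fun y => y (Fin.last k) = c ∧ ∀ i : Fin (k + 1), i ≠ Fin.last k → y i ≠ c]
  refine sum_congr (filter_congr fun y _ => ?_) fun _ _ => rfl
  rw [Fin.forall_fin_succ, ← Fin.succ_last]
  simp only [Fin.tail, ne_eq, Fin.succ_inj]
  constructor
  · rintro ⟨rfl, hl, -, hav⟩
    exact ⟨rfl, hl, hav⟩
  · rintro ⟨rfl, hl, hav⟩
    exact ⟨rfl, hl, fun _ => hac, hav⟩

theorem pow_apply_eq_sum_firstPassage_mul (k : ℕ) (a c : ι) :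
    (P ^ k) a c = ∑ j ∈ range (k + 1), P.firstPassage j a c * (P ^ (k - j)) c c := by
  induction k generalizing a with
  | zero => simp [firstPassage_zero]
  | succ k ih =>
    rw [sum_range_succ']
    by_cases hac : a = c
    · subst hac
      simp [firstPassage_succ_self, firstPassage_zero]
    · simp only [firstPassage_succ_of_ne P _ hac, firstPassage_zero, one_apply_ne hac, zero_mul,
        add_zero, sum_mul, Nat.succ_sub_succ, pow_succ', mul_apply, ih, mul_sum]
      rw [sum_comm]
      simp only [mul_assoc]

end Paths

variable {ι : Type*} [Fintype ι] [DecidableEq ι]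

theorem hasSum_pow_apply_nonsing_inv {R : Type*} [CommRing R] [TopologicalSpace R]
    [IsTopologicalRing R] [T2Space R] {P : Matrix ι ι R} (h : Summable (P ^ ·)) (a c : ι) :
    HasSum (fun k => (P ^ k) a c) ((1 - P)⁻¹ a c) := by
  have hP : HasSum (P ^ ·) (1 - P)⁻¹ := by
    rw [inv_eq_right_inv h.one_sub_mul_tsum_pow]
    exact h.hasSum
  exact Pi.hasSum.1 (Pi.hasSum.1 hP a) c

theorem diagonal_mul_nonsing_inv_apply {K : Type*} [Field K] {d : ι → K} (hd : ∀ i, d i ≠ 0)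
    {A : Matrix ι ι K} (hA : IsUnit A.det) (a c : ι) :
    (diagonal d * A)⁻¹ a c = A⁻¹ a c * (d c)⁻¹ := by
  suffices (diagonal d * A)⁻¹ = A⁻¹ * diagonal d⁻¹ by
    rw [this, mul_diagonal, Pi.inv_apply]
  refine inv_eq_right_inv ?_
  rw [mul_assoc, ← mul_assoc A, mul_nonsing_inv _ hA, one_mul, diagonal_mul_diagonal,
    ← diagonal_one]
  exact congrArg diagonal (funext fun i => mul_inv_cancel₀ (hd i))

section Substochastic

variable {P : Matrix ι ι ℝ}

theorem antitone_sum_pow_apply (hP0 : ∀ i j, 0 ≤ P i j) (hP1 : ∀ i, ∑ j, P i j ≤ 1) (i : ι) :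
    Antitone fun n => ∑ j, (P ^ n) i j := by
  refine antitone_nat_of_succ_le fun n => ?_
  rw [pow_succ, sum_mul_apply]
  exact sum_le_sum fun k _ => mul_le_of_le_one_right (pow_apply_nonneg hP0 n i k) (hP1 k)

theorem sum_pow_apply_le_one (hP0 : ∀ i j, 0 ≤ P i j) (hP1 : ∀ i, ∑ j, P i j ≤ 1) (n : ℕ)
    (i : ι) : ∑ j, (P ^ n) i j ≤ 1 := by
  simpa [one_apply] using antitone_sum_pow_apply hP0 hP1 i (Nat.zero_le n)

theorem sum_pow_succ_apply_lt_one (hP0 : ∀ i j, 0 ≤ P i j) (hP1 : ∀ i, ∑ j, P i j ≤ 1)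
    {n : ℕ} {i b : ι} (hib : 0 < P i b) (hb : ∑ j, (P ^ n) b j < 1) :
    ∑ j, (P ^ (n + 1)) i j < 1 := by
  rw [pow_succ', sum_mul_apply]
  calc ∑ k, P i k * ∑ j, (P ^ n) k j
      < ∑ k, P i k := sum_lt_sum
        (fun k _ => mul_le_of_le_one_right (hP0 i k) (sum_pow_apply_le_one hP0 hP1 n k))
        ⟨b, mem_univ b, mul_lt_of_lt_one_right hib hb⟩
    _ ≤ 1 := hP1 i

theorem summable_pow_of_forall_exists_sum_pow_apply_lt_one (hP0 : ∀ i j, 0 ≤ P i j)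
    (hP1 : ∀ i, ∑ j, P i j ≤ 1) (hleak : ∀ i, ∃ n, ∑ j, (P ^ n) i j < 1) :
    Summable (P ^ ·) := by
  choose n hn using hleak
  set N := univ.sup n + 1
  have hN : ∀ i, ∑ j, (P ^ N) i j < 1 := fun i =>
    (antitone_sum_pow_apply hP0 hP1 i ((le_sup (mem_univ i)).trans (univ.sup n).le_succ)).trans_lt
      (hn i)
  -- in the `ℓ∞` operator norm, `‖A‖` is the largest row sum of `|A i j|`
  let _ := Matrix.linftyOpNormedRing (n := ι) (α := ℝ)
  let _ := Matrix.linftyOpNormedAlgebra (R := ℝ) (n := ι) (α := ℝ)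
  have := FiniteDimensional.complete ℝ (Matrix ι ι ℝ)
  refine summable_pow_of_norm_pow_lt_one (N := N) ?_
  rw [linfty_opNorm_def, ← NNReal.coe_one, NNReal.coe_lt_coe, Finset.sup_lt_iff one_pos]
  intro i _
  rw [← NNReal.coe_lt_coe]
  simpa [Real.norm_of_nonneg (pow_apply_nonneg hP0 N i _)] using hN i

theorem firstPassage_le_pow_apply (hP0 : ∀ i j, 0 ≤ P i j) (k : ℕ) (a c : ι) :
    P.firstPassage k a c ≤ (P ^ k) a c := by
  rw [pow_apply_eq_sum_pathWeight, firstPassage]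
  exact sum_le_sum_of_subset_of_nonneg
    (monotone_filter_right _ fun _ _ => And.imp_right And.left)
    fun y _ _ => prod_nonneg fun i _ => hP0 _ _

theorem nonsing_inv_apply_eq_tsum_firstPassage_mul (hP0 : ∀ i j, 0 ≤ P i j)
    (h : Summable (P ^ ·)) (a c : ι) :
    (1 - P)⁻¹ a c = (∑' k, P.firstPassage k a c) * (1 - P)⁻¹ c c := by
  have hG := hasSum_pow_apply_nonsing_inv h
  have hf0 : ∀ k, 0 ≤ P.firstPassage k a c := fun k =>
    sum_nonneg fun y _ => prod_nonneg fun i _ => hP0 _ _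
  have hf : Summable fun k => P.firstPassage k a c :=
    (hG a c).summable.of_nonneg_of_le hf0 (firstPassage_le_pow_apply hP0 · a c)
  rw [← (hG a c).tsum_eq, ← (hG c c).tsum_eq,
    hf.tsum_mul_tsum_eq_tsum_sum_range (hG c c).summable
      (hf.mul_of_nonneg (hG c c).summable hf0 fun k => pow_apply_nonneg hP0 k c c)]
  exact tsum_congr fun k => pow_apply_eq_sum_firstPassage_mul P k a c

end Substochastic

end Matrix

section WeightedGraph

variable {V : Type*} [Fintype V] {W : V → V → ℝ} {Z : Finset V}

noncomputable def killedTransition (W : V → V → ℝ) (Z : Finset V) :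
    Matrix {v // v ∉ Z} {v // v ∉ Z} ℝ :=
  Matrix.of fun a c => stepProb W a c

theorem killedTransition_nonneg (hW : ∀ v w, 0 ≤ W v w) (a c : {v // v ∉ Z}) :
    0 ≤ killedTransition W Z a c :=
  div_nonneg (hW a c) (sum_nonneg fun u _ => hW a u)

theorem sum_weight_pos_of_pos (hW : ∀ v w, 0 ≤ W v w) {a b : V} (hab : 0 < W a b) :
    0 < ∑ u, W a u :=
  hab.trans_le (single_le_sum (fun u _ => hW a u) (mem_univ b))

theorem sum_weight_pos_of_reflTransGen (hW : ∀ v w, 0 ≤ W v w) {v z : V}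
    (hvz : Relation.ReflTransGen (fun a c => 0 < W a c) v z) (hne : v ≠ z) :
    0 < ∑ u, W v u := by
  rcases hvz.cases_head with rfl | ⟨b, hvb, -⟩
  · exact absurd rfl hne
  · exact sum_weight_pos_of_pos hW hvb

variable [DecidableEq V]

theorem sum_killedTransition_apply (a : {v // v ∉ Z}) :
    ∑ c, killedTransition W Z a c = (∑ u, W a u - ∑ u ∈ Z, W a u) / ∑ u, W a u := by
  simp only [killedTransition, Matrix.of_apply, stepProb, ← sum_div]
  rw [← eq_sub_iff_add_eq.2 (sum_compl_add_sum Z (W a)),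
    sum_subtype Zᶜ (fun _ => mem_compl) (W a ·)]

theorem sum_killedTransition_le_one (hW : ∀ v w, 0 ≤ W v w) (a : {v // v ∉ Z}) :
    ∑ c, killedTransition W Z a c ≤ 1 := by
  rw [sum_killedTransition_apply]
  exact div_le_one_of_le₀ (sub_le_self _ (sum_nonneg fun u _ => hW a u))
    (sum_nonneg fun u _ => hW a u)

theorem sum_killedTransition_lt_one (hW : ∀ v w, 0 ≤ W v w) {a : {v // v ∉ Z}} {b : V}
    (hb : b ∈ Z) (hab : 0 < W a b) : ∑ c, killedTransition W Z a c < 1 := by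
  rw [sum_killedTransition_apply, div_lt_one (sum_weight_pos_of_pos hW hab)]
  exact sub_lt_self _ (hab.trans_le (single_le_sum (fun u _ => hW a u) hb))

theorem exists_sum_killedTransition_pow_lt_one (hW : ∀ v w, 0 ≤ W v w) {v z : V}
    (hz : z ∈ Z) (hvz : Relation.ReflTransGen (fun a c => 0 < W a c) v z) (hv : v ∉ Z) :
    ∃ n, ∑ c, (killedTransition W Z ^ n) ⟨v, hv⟩ c < 1 := by
  induction hvz using Relation.ReflTransGen.head_induction_on with
  | refl => exact absurd hz hv
  | @head a b hab _ ih =>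
    by_cases hb : b ∈ Z
    · exact ⟨1, by simpa using sum_killedTransition_lt_one hW hb hab⟩
    · obtain ⟨n, hn⟩ := ih hb
      exact ⟨n + 1, Matrix.sum_pow_succ_apply_lt_one (killedTransition_nonneg hW)
        (sum_killedTransition_le_one hW) (div_pos hab (sum_weight_pos_of_pos hW hab)) hn⟩

theorem summable_pow_killedTransition (hW : ∀ v w, 0 ≤ W v w) {z : V} (hz : z ∈ Z)
    (hreach : ∀ v : V, Relation.ReflTransGen (fun a c => 0 < W a c) v z) :
    Summable (killedTransition W Z ^ ·) :=
  Matrix.summable_pow_of_forall_exists_sum_pow_apply_lt_one (killedTransition_nonneg hW)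
    (sum_killedTransition_le_one hW)
    fun a => exists_sum_killedTransition_pow_lt_one hW hz (hreach a) a.2

theorem eq_diagonal_mul_one_sub_killedTransition {L : Matrix {v // v ∉ Z} {v // v ∉ Z} ℝ}
    (hL : ∀ a c, L a c = (if a = c then ∑ u, W a.1 u else 0) - W a.1 c.1)
    (hdeg : ∀ a : {v // v ∉ Z}, ∑ u, W a u ≠ 0) :
    L = Matrix.diagonal (fun a : {v // v ∉ Z} => ∑ u, W a u) * (1 - killedTransition W Z) := by
  ext a c
  rw [Matrix.diagonal_mul, hL, Matrix.sub_apply, mul_sub, Matrix.one_apply]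
  simp only [killedTransition, Matrix.of_apply, stepProb, mul_div_cancel₀ _ (hdeg a)]
  split_ifs <;> simp

theorem occupation_eq_tsum_pow {w : V} (hw : w ∉ Z) :
    occupation W Z w = ∑' k, (killedTransition W Z ^ k) ⟨w, hw⟩ ⟨w, hw⟩ := by
  refine tsum_congr fun k => ?_
  rw [Matrix.pow_apply_eq_sum_pathWeight, sum_filter]
  refine (sum_eq_sum_subtype_of_not_forall (· ∉ Z) _ fun x hx => if_neg (by tauto)).trans
    (sum_congr rfl fun y _ => ?_)
  have hy : ∀ i, (y i : V) ∉ Z := fun i => (y i).2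
  simp [Subtype.ext_iff, hy, Matrix.pathWeight, killedTransition]

theorem hitBefore_eq_tsum_firstPassage {v w : V} (hv : v ∉ Z) (hw : w ∉ Z) :
    hitBefore W Z v w = ∑' k, (killedTransition W Z).firstPassage k ⟨v, hv⟩ ⟨w, hw⟩ := by
  refine tsum_congr fun k => ?_
  rw [Matrix.firstPassage, sum_filter]
  refine (sum_eq_sum_subtype_of_not_forall (· ∉ Z) _ fun x hx => if_neg (by tauto)).trans
    (sum_congr rfl fun y _ => ?_)
  have hy : ∀ i, (y i : V) ∉ Z := fun i => (y i).2
  simp [Subtype.ext_iff, hy, Matrix.pathWeight, killedTransition]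

end WeightedGraph

theorem stmt6_general {V : Type*} [Fintype V] [DecidableEq V]
    (W : V → V → ℝ)
    (hnonneg : ∀ v w, 0 ≤ W v w)
    (hconn : ∀ v w : V, Relation.ReflTransGen (fun a c => 0 < W a c) v w)
    (Z : Finset V) (hZ : Z.Nonempty)
    (Lbar : Matrix {v : V // v ∉ Z} {v : V // v ∉ Z} ℝ)
    (hLbar : ∀ a c, Lbar a c = (if a = c then ∑ u, W a.1 u else 0) - W a.1 c.1) :
    IsUnit Lbar.det ∧
      ∀ (v w : V) (hv : v ∉ Z) (hw : w ∉ Z),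
        Lbar⁻¹ ⟨v, hv⟩ ⟨w, hw⟩ = Lbar⁻¹ ⟨w, hw⟩ ⟨w, hw⟩ * hitBefore W Z v w ∧
        Lbar⁻¹ ⟨w, hw⟩ ⟨w, hw⟩ = (1 / ∑ u, W w u) * occupation W Z w := by
  obtain ⟨z, hz⟩ := hZ
  set P := killedTransition W Z
  have hdeg : ∀ a : {v // v ∉ Z}, ∑ u, W a u ≠ 0 := fun a =>
    (sum_weight_pos_of_reflTransGen hnonneg (hconn a z) fun h => a.2 (h ▸ hz)).ne'
  have hsum : Summable (P ^ ·) := summable_pow_killedTransition hnonneg hz fun v => hconn v z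
  have hunit : IsUnit (1 - P).det := Matrix.isUnit_det_of_right_inverse hsum.one_sub_mul_tsum_pow
  have hL := eq_diagonal_mul_one_sub_killedTransition hLbar hdeg
  have hinv : ∀ a c, Lbar⁻¹ a c = (1 - P)⁻¹ a c * (∑ u, W c u)⁻¹ := fun a c => by
    rw [hL, Matrix.diagonal_mul_nonsing_inv_apply hdeg hunit]
  refine ⟨?_, fun v w hv hw => ⟨?_, ?_⟩⟩
  · rw [hL, Matrix.det_mul, Matrix.det_diagonal]
    exact (IsUnit.mk0 _ (prod_ne_zero_iff.2 fun a _ => hdeg a)).mul hunit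
  · rw [hinv, hinv, Matrix.nonsing_inv_apply_eq_tsum_firstPassage_mul
      (killedTransition_nonneg hnonneg) hsum, hitBefore_eq_tsum_firstPassage hv hw]
    ring
  · rw [hinv, occupation_eq_tsum_pow hw, (Matrix.hasSum_pow_apply_nonsing_inv hsum _ _).tsum_eq]
    ring

/-- the restricted Laplacian is invertible and its inverse is given
by hitting probabilities and expected occupation times of the random walk. -/
theorem stmt6 {V : Type*} [Fintype V] [DecidableEq V]
    (W : V → V → ℝ)
    (hsymm : ∀ v w, W v w = W w v) (hnonneg : ∀ v w, 0 ≤ W v w)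
    (hloop : ∀ v, W v v = 0)
    (hconn : ∀ v w : V, Relation.ReflTransGen (fun a c => 0 < W a c) v w)
    (Z : Finset V) (hZ : Z.Nonempty)
    (Lbar : Matrix {v : V // v ∉ Z} {v : V // v ∉ Z} ℝ)
    (hLbar : ∀ a c, Lbar a c = (if a = c then ∑ u, W a.1 u else 0) - W a.1 c.1) :
    IsUnit Lbar.det ∧
      ∀ (v w : V) (hv : v ∉ Z) (hw : w ∉ Z),
        Lbar⁻¹ ⟨v, hv⟩ ⟨w, hw⟩ = Lbar⁻¹ ⟨w, hw⟩ ⟨w, hw⟩ * hitBefore W Z v w ∧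
        Lbar⁻¹ ⟨w, hw⟩ ⟨w, hw⟩ = (1 / ∑ u, W w u) * occupation W Z w :=
  stmt6_general W hnonneg hconn Z hZ Lbar hLbar
end

section
/- Modified gambler's ruin with killing: consider states {0,1,...,t+1}, with absorbing states 0 and t+1; from state s ∈ {1,...,t}, the chain moves to s−1 with probability q_s, to s+1 with probability p_s, and jumps directly to t+1 with probability r_s = 1 − p_s − q_s ≥ 0. Define α₁ = α₂ = 1, α_s = α_{s−1} − p_{s−2}q_{s−1}α_{s−2} for s ≥ 3; β₀ = 0, β₁ = β₂ = 1, β_s = β_{s−1} − p_{s−1}q_sβ_{s−2} for s ≥ 3. Then the hitting probabilities f_s = P_s(hit 0 before t+1), which satisfy f_s = q_s f_{s−1} + p_s f_{s+1} for 1 ≤ s ≤ t with f₀ = 1, f_{t+1} = 0, are given by f_s = (p₀q₁/(p₀⋯p_{s−1})) · (α_s β_t/α_{t+1} − β_{s−1}) for 1 ≤ s ≤ t+1, provided all p_s > 0 and α_{t+1} ≠ 0. -/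
/-!
Multiplied by `p 1 ⋯ p (s - 1)`, the recursion `f s = q s f (s - 1) + p s f (s + 1)` becomes the
continuant recursion `x (s + 2) = x (s + 1) - p s q (s + 1) x s`, which `α` and `β (· - 1)` also
satisfy. Matching initial values at `s = 1, 2` gives
`p 1 ⋯ p (s - 1) f s = f 1 α s - q 1 f 0 β (s - 1)`, and `f (t + 1) = 0` then forces
`f 1 = q 1 β t / α (t + 1)`.
-/

open Finset

def SatisfiesRec (a b : ℕ → ℝ) (n : ℕ) (x : ℕ → ℝ) : Prop :=
  ∀ s, 1 ≤ s → s + 2 ≤ n → x (s + 2) = a s * x (s + 1) + b s * x s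

namespace SatisfiesRec

variable {a b : ℕ → ℝ} {n : ℕ} {x y : ℕ → ℝ}

theorem mul_sub_mul (hx : SatisfiesRec a b n x) (hy : SatisfiesRec a b n y) (u v : ℝ) :
    SatisfiesRec a b n (fun s => u * x s - v * y s) := by
  intro s h1 h2
  show u * x (s + 2) - v * y (s + 2) =
    a s * (u * x (s + 1) - v * y (s + 1)) + b s * (u * x s - v * y s)
  rw [hx s h1 h2, hy s h1 h2]
  ring

theorem eq_of_eq_of_eq (hx : SatisfiesRec a b n x) (hy : SatisfiesRec a b n y)
    (h1 : x 1 = y 1) (h2 : 2 ≤ n → x 2 = y 2) : ∀ s, 1 ≤ s → s ≤ n → x s = y s := by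
  intro s
  induction s using Nat.strong_induction_on with
  | _ s ih =>
    intro hs hsn
    match s with
    | 1 => exact h1
    | 2 => exact h2 hsn
    | m + 3 =>
      rw [hx (m + 1) (by omega) hsn, hy (m + 1) (by omega) hsn,
        ih (m + 2) (by omega) (by omega) (by omega), ih (m + 1) (by omega) (by omega) (by omega)]

end SatisfiesRec

section GamblersRuin

variable (p q : ℕ → ℝ)

theorem satisfiesRec_prod_mul {n : ℕ} {f : ℕ → ℝ}
    (hrec : ∀ s, 1 ≤ s → s < n → f s = q s * f (s - 1) + p s * f (s + 1)) :
    SatisfiesRec 1 (fun s => -(p s * q (s + 1))) n (fun s => (∏ i ∈ Ico 1 s, p i) * f s) := by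
  intro s hs hsn
  have hf : p (s + 1) * f (s + 2) = f (s + 1) - q (s + 1) * f s := by
    have h := hrec (s + 1) (by omega) (by omega)
    rw [Nat.add_sub_cancel] at h
    linarith
  show (∏ i ∈ Ico 1 (s + 2), p i) * f (s + 2) =
    1 * ((∏ i ∈ Ico 1 (s + 1), p i) * f (s + 1)) +
      -(p s * q (s + 1)) * ((∏ i ∈ Ico 1 s, p i) * f s)
  rw [prod_Ico_succ_top (by omega), prod_Ico_succ_top (b := s) (by omega)]
  linear_combination (∏ i ∈ Ico 1 s, p i) * p s * hf

variable {p q}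

theorem satisfiesRec_of_alpha {α : ℕ → ℝ}
    (hαrec : ∀ s, 3 ≤ s → α s = α (s - 1) - p (s - 2) * q (s - 1) * α (s - 2)) (n : ℕ) :
    SatisfiesRec 1 (fun s => -(p s * q (s + 1))) n α := by
  intro s hs _
  show α (s + 2) = 1 * α (s + 1) + -(p s * q (s + 1)) * α s
  rw [hαrec (s + 2) (by omega), show s + 2 - 1 = s + 1 from rfl, Nat.add_sub_cancel]
  ring

theorem satisfiesRec_of_beta {β : ℕ → ℝ} (hβ0 : β 0 = 0) (hβ1 : β 1 = 1) (hβ2 : β 2 = 1)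
    (hβrec : ∀ s, 3 ≤ s → β s = β (s - 1) - p (s - 1) * q s * β (s - 2)) (n : ℕ) :
    SatisfiesRec 1 (fun s => -(p s * q (s + 1))) n (fun s => β (s - 1)) := by
  intro s hs _
  obtain rfl | hs2 := eq_or_lt_of_le hs
  · simp [hβ0, hβ1, hβ2]
  · show β (s + 1) = 1 * β s + -(p s * q (s + 1)) * β (s - 1)
    rw [hβrec (s + 1) (by omega), Nat.add_sub_cancel, show s + 1 - 2 = s - 1 by omega]
    ring

theorem prod_mul_eq_of_rec {α β f : ℕ → ℝ} {n : ℕ}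
    (hα1 : α 1 = 1) (hα2 : α 2 = 1)
    (hαrec : ∀ s, 3 ≤ s → α s = α (s - 1) - p (s - 2) * q (s - 1) * α (s - 2))
    (hβ0 : β 0 = 0) (hβ1 : β 1 = 1) (hβ2 : β 2 = 1)
    (hβrec : ∀ s, 3 ≤ s → β s = β (s - 1) - p (s - 1) * q s * β (s - 2))
    (hrec : ∀ s, 1 ≤ s → s < n → f s = q s * f (s - 1) + p s * f (s + 1)) :
    ∀ s, 1 ≤ s → s ≤ n →
      (∏ i ∈ Ico 1 s, p i) * f s = f 1 * α s - q 1 * f 0 * β (s - 1) := by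
  refine (satisfiesRec_prod_mul p q hrec).eq_of_eq_of_eq
    ((satisfiesRec_of_alpha hαrec n).mul_sub_mul
      (satisfiesRec_of_beta hβ0 hβ1 hβ2 hβrec n) (f 1) (q 1 * f 0)) ?_ ?_
  · simp [hα1, hβ0]
  · intro hn
    have h := hrec 1 le_rfl hn
    norm_num [hα2, hβ1] at h ⊢
    linarith

end GamblersRuin

theorem stmt9_general (t : ℕ) (p q : ℕ → ℝ)
    (hp : ∀ s, s ≤ t → 0 < p s)
    (α β : ℕ → ℝ)
    (hα1 : α 1 = 1) (hα2 : α 2 = 1)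
    (hαrec : ∀ s, 3 ≤ s → α s = α (s - 1) - p (s - 2) * q (s - 1) * α (s - 2))
    (hβ0 : β 0 = 0) (hβ1 : β 1 = 1) (hβ2 : β 2 = 1)
    (hβrec : ∀ s, 3 ≤ s → β s = β (s - 1) - p (s - 1) * q s * β (s - 2))
    (hαt : α (t + 1) ≠ 0)
    (f : ℕ → ℝ) (hf0 : f 0 = 1) (hft : f (t + 1) = 0)
    (hrec : ∀ s, 1 ≤ s → s ≤ t → f s = q s * f (s - 1) + p s * f (s + 1)) :
    ∀ s, 1 ≤ s → s ≤ t + 1 →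
      f s = (p 0 * q 1 / ∏ i ∈ Finset.range s, p i) *
        (α s * β t / α (t + 1) - β (s - 1)) := by
  have hkey := prod_mul_eq_of_rec hα1 hα2 hαrec hβ0 hβ1 hβ2 hβrec
    (fun s h1 h2 => hrec s h1 (Nat.lt_succ_iff.mp h2))
  have hf1 : f 1 * α (t + 1) = q 1 * β t := by
    simpa [hf0, hft, sub_eq_zero, eq_comm] using hkey (t + 1) (by omega) le_rfl
  intro s hs1 hs2
  have hP : ∏ i ∈ Ico 1 s, p i ≠ 0 :=
    prod_ne_zero_iff.mpr fun i hi => (hp i (by simp at hi; omega)).ne'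
  have hp0 : p 0 ≠ 0 := (hp 0 (Nat.zero_le t)).ne'
  have hs := hkey s hs1 hs2
  rw [hf0, mul_one] at hs
  rw [range_eq_Ico, prod_eq_prod_Ico_succ_bot (by omega), zero_add]
  field_simp
  linear_combination α (t + 1) * hs + α s * hf1

/-- modified gambler's ruin with killing: the hitting probabilities
solving the boundary-value recursion are given by the explicit `α`/`β` formula. -/
theorem stmt9 (t : ℕ) (ht : 1 ≤ t) (p q : ℕ → ℝ)
    (hp : ∀ s, s ≤ t → 0 < p s)
    (hq : ∀ s, 1 ≤ s → s ≤ t → 0 < q s)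
    (hpq : ∀ s, 1 ≤ s → s ≤ t → p s + q s ≤ 1)
    (hp0 : p 0 < 1) (hq0 : q 0 = 1 - p 0)
    (α β : ℕ → ℝ)
    (hα1 : α 1 = 1) (hα2 : α 2 = 1)
    (hαrec : ∀ s, 3 ≤ s → α s = α (s - 1) - p (s - 2) * q (s - 1) * α (s - 2))
    (hβ0 : β 0 = 0) (hβ1 : β 1 = 1) (hβ2 : β 2 = 1)
    (hβrec : ∀ s, 3 ≤ s → β s = β (s - 1) - p (s - 1) * q s * β (s - 2))
    (hαt : α (t + 1) ≠ 0)
    (f : ℕ → ℝ) (hf0 : f 0 = 1) (hft : f (t + 1) = 0)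
    (hrec : ∀ s, 1 ≤ s → s ≤ t → f s = q s * f (s - 1) + p s * f (s + 1)) :
    ∀ s, 1 ≤ s → s ≤ t + 1 →
      f s = (p 0 * q 1 / ∏ i ∈ Finset.range s, p i) *
        (α s * β t / α (t + 1) - β (s - 1)) :=
  stmt9_general t p q hp α β hα1 hα2 hαrec hβ0 hβ1 hβ2 hβrec hαt f hf0 hft hrec
end

section
/- For the min-sum voltage algorithm on a cycle with equal weights ω, the L-norm error satisfies ‖ν* − ν̂ᵗ‖²_L = (1/2)‖ν*‖²_L + (ω/2)·Σ_{v=0}^{n−1} ν*_v (2ν*_{ρ(v+2t+2)} − ν*_{ρ(v+2t+3)} − ν*_{ρ(v+2t+1)}), given that ν*_v − ν̂ᵗ_v = (1/2)(ν*_{ρ(v−t−1)} + ν*_{ρ(v+t+1)}) for all v, where ρ(i) = i mod n and ‖ν‖²_L = ω·Σ_{v=0}^{n−1}(ν_{ρ(v+1)} − ν_v)². -/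
/-!
The error relation makes the error a half-sum of two translates of `ν*` by `±(t+1)`, so its
discrete derivative is the half-sum `(D(v-s) + D(v+s))/2` of translates of `D = ∇ν*`. Squaring and
summing over the cyclic group, translation invariance of the sums turns the two squares into
`‖ν*‖²_L` and the cross term into the correlation `∑ D v · D(v + 2s)`, which summation by parts
rewrites as the second-difference sum on the right.
-/

open Finset

section CyclicSums

variable {G R : Type*} [AddCommGroup G] [Fintype G] [CommRing R]

theorem sum_comp_add_right (f : G → R) (c : G) : ∑ v, f (v + c) = ∑ v, f v :=
  Equiv.sum_comp (Equiv.addRight c) f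

theorem sum_sq_add_shifts (D : G → R) (s : G) :
    ∑ v, (D (v - s) + D (v + s)) ^ 2 = 2 * ∑ v, D v ^ 2 + 2 * ∑ v, D v * D (v + 2 • s) := by
  have hsq_minus : ∑ v, D (v - s) ^ 2 = ∑ v, D v ^ 2 := by
    simpa only [sub_eq_add_neg] using sum_comp_add_right (fun v => D v ^ 2) (-s)
  have hsq_plus : ∑ v, D (v + s) ^ 2 = ∑ v, D v ^ 2 := sum_comp_add_right (fun v => D v ^ 2) s
  have hcross : ∑ v, D (v - s) * D (v + s) = ∑ v, D v * D (v + 2 • s) := by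
    rw [← sum_comp_add_right _ s]
    simp only [add_sub_cancel_right, add_assoc, two_nsmul]
  calc ∑ v, (D (v - s) + D (v + s)) ^ 2
      = ∑ v, D (v - s) ^ 2 + 2 * ∑ v, D (v - s) * D (v + s) + ∑ v, D (v + s) ^ 2 := by
        simp only [add_sq, sum_add_distrib, ← mul_sum, mul_assoc]
    _ = _ := by rw [hsq_minus, hsq_plus, hcross]; ring

theorem sum_diff_mul_diff_shift (f : G → R) (a c : G) :
    ∑ v, (f (v + a) - f v) * (f (v + c + a) - f (v + c)) =
      ∑ v, f v * (2 * f (v + c) - f (v + c + a) - f (v + c - a)) := by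
  have h : ∑ v, f (v + a) * f (v + c + a) = ∑ v, f v * f (v + c) := by
    rw [← sum_comp_add_right (fun v => f v * f (v + c)) a]
    simp only [add_right_comm]
  have h' : ∑ v, f (v + a) * f (v + c) = ∑ v, f v * f (v + c - a) := by
    rw [← sum_comp_add_right (fun v => f v * f (v + c - a)) a]
    simp only [add_right_comm _ a c, add_sub_cancel_right]
  simp only [mul_sub, sub_mul, two_mul, mul_add, sum_add_distrib, sum_sub_distrib, h, h']
  ring

end CyclicSums

theorem stmt14_general (n : ℕ) [NeZero n] (ω : ℝ) (t : ℕ)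
    (νstar νhat : ZMod n → ℝ)
    (herr : ∀ v : ZMod n, νstar v - νhat v =
      (1 / 2) * (νstar (v - ((t : ZMod n) + 1)) + νstar (v + ((t : ZMod n) + 1)))) :
    ω * ∑ v : ZMod n, ((νstar - νhat) (v + 1) - (νstar - νhat) v) ^ 2 =
      (1 / 2) * (ω * ∑ v : ZMod n, (νstar (v + 1) - νstar v) ^ 2) +
        (ω / 2) * ∑ v : ZMod n,
          νstar v * (2 * νstar (v + (2 * (t : ZMod n) + 2)) -
            νstar (v + (2 * (t : ZMod n) + 3)) - νstar (v + (2 * (t : ZMod n) + 1))) := by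
  set s : ZMod n := (t : ZMod n) + 1
  set D : ZMod n → ℝ := fun v => νstar (v + 1) - νstar v
  have herr_diff : ∀ v, (νstar - νhat) (v + 1) - (νstar - νhat) v =
      (1 / 2) * (D (v - s) + D (v + s)) := by
    intro v
    simp only [Pi.sub_apply, herr, D, sub_add_eq_add_sub, add_right_comm v 1 s]
    ring
  have hshift : 2 • s = 2 * (t : ZMod n) + 2 := by simp only [s, two_nsmul]; ring
  have hcross : ∑ v, D v * D (v + 2 • s) = ∑ v, νstar v * (2 * νstar (v + (2 * (t : ZMod n) + 2)) -
      νstar (v + (2 * (t : ZMod n) + 3)) - νstar (v + (2 * (t : ZMod n) + 1))) := by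
    rw [sum_diff_mul_diff_shift νstar 1 (2 • s), hshift]
    refine sum_congr rfl fun v _ => ?_
    ring_nf
  simp only [herr_diff, mul_pow, ← mul_sum, sum_sq_add_shifts, hcross]
  ring

/-- min-sum voltage L-norm error identity on the equally weighted
cycle, given the pointwise error relation. -/
theorem stmt14 (n : ℕ) [NeZero n] (ω : ℝ) (hω : 0 < ω) (t : ℕ)
    (νstar νhat : ZMod n → ℝ)
    (herr : ∀ v : ZMod n, νstar v - νhat v =
      (1 / 2) * (νstar (v - ((t : ZMod n) + 1)) + νstar (v + ((t : ZMod n) + 1)))) :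
    ω * ∑ v : ZMod n, ((νstar - νhat) (v + 1) - (νstar - νhat) v) ^ 2 =
      (1 / 2) * (ω * ∑ v : ZMod n, (νstar (v + 1) - νstar v) ^ 2) +
        (ω / 2) * ∑ v : ZMod n,
          νstar v * (2 * νstar (v + (2 * (t : ZMod n) + 2)) -
            νstar (v + (2 * (t : ZMod n) + 3)) - νstar (v + (2 * (t : ZMod n) + 1))) :=
  stmt14_general n ω t νstar νhat herr
end
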